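/- Suppose w ∈ S_n has a 321-pattern (indices i₀ < j₀ < k₀ with w(i₀) > w(j₀) > w(k₀)). Then w has a 321-pattern i < j < k with i ∈ E_pos(w) and k ∉ E_pos(w); moreover, for such a pattern, exactly one of the five permutations obtained from w by nontrivially rearranging the values w(i), w(j), w(k) among the positions i, j, k (agreeing with w elsewhere) belongs to the same excedance class as w. -/

import Mathlib

open scoped Classical

noncomputable section

/-- `IsNCP n A` : `A` is the arc set of a noncrossing partition of size `n`
(arcs `(i,j)` with `i < j`; no two distinct arcs `(i,k)`, `(j,l)` with `i ≤ j < k ≤ l`,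
i.e. no crossings and no shared endpoints). -/
def IsNCP (n : ℕ) (A : Finset (Fin n × Fin n)) : Prop :=
  (∀ p ∈ A, p.1 < p.2) ∧
    ∀ p ∈ A, ∀ q ∈ A, p ≠ q → ¬(p.1 ≤ q.1 ∧ q.1 < p.2 ∧ p.2 ≤ q.2)

/-- Noncrossing partitions of size `n` (labelled `1, …, n`, realized as `Fin n`). -/
def NCP (n : ℕ) : Type := {A : Finset (Fin n × Fin n) // IsNCP n A}

noncomputable instance (n : ℕ) : Fintype (NCP n) := by
  unfold NCP; infer_instance

namespace NCP

variable {n : ℕ}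

/-- The set `λ⁺` of left endpoints of arcs. -/
def lpos (lam : NCP n) : Finset (Fin n) := lam.1.image Prod.fst

/-- The set `λ⁻` of right endpoints of arcs. -/
def rpos (lam : NCP n) : Finset (Fin n) := lam.1.image Prod.snd

/-- `a` and `b` lie in the same connected component of `λ` viewed as a graph. -/
def Connected (lam : NCP n) (a b : Fin n) : Prop :=
  Relation.ReflTransGen (fun x y => (x, y) ∈ lam.1 ∨ (y, x) ∈ lam.1) a b

/-- The connected component of `j` in `λ`. -/
def component (lam : NCP n) (j : Fin n) : Finset (Fin n) :=
  Finset.univ.filter fun i => Connected lam j i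

theorem mem_component_self (lam : NCP n) (j : Fin n) : j ∈ component lam j :=
  Finset.mem_filter.mpr ⟨Finset.mem_univ j, Relation.ReflTransGen.refl⟩

/-- The largest element of the connected component of `j` in `λ`. -/
def compMax (lam : NCP n) (j : Fin n) : Fin n :=
  (component lam j).max' ⟨j, mem_component_self lam j⟩

/-- The function underlying the permutation `Q_λ` : `j ↦ i` if `(i,j)` is an arc of `λ`,
and `j ↦` the largest element of the connected component of `j` otherwise. -/
def Qfun (lam : NCP n) (j : Fin n) : Fin n :=
  if h : ∃ i, (i, j) ∈ lam.1 then h.choose else compMax lam j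

/-- `Q` is the permutation `Q_λ`. -/
def IsQ (lam : NCP n) (Q : Equiv.Perm (Fin n)) : Prop :=
  ∀ j, Q j = Qfun lam j

/-- `T` is the permutation `T_λ` : the bijection mapping `λ⁻` onto `λ⁺` in an
order-preserving way and the complement of `λ⁻` onto the complement of `λ⁺` in an
order-preserving way. -/
def IsT (lam : NCP n) (T : Equiv.Perm (Fin n)) : Prop :=
  (∀ j, j ∈ rpos lam ↔ T j ∈ lpos lam) ∧
  (∀ j j', j ∈ rpos lam → j' ∈ rpos lam → j < j' → T j < T j') ∧
  (∀ j j', j ∉ rpos lam → j' ∉ rpos lam → j < j' → T j < T j')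

end NCP

/-- Weak excedance positions `E_pos(w) = {i : i ≤ w(i)}`. -/
def ExcPos {n : ℕ} (w : Equiv.Perm (Fin n)) : Finset (Fin n) :=
  Finset.univ.filter fun i => i ≤ w i

/-- Weak excedance values `E_val(w) = {w(i) : i ≤ w(i)}`. -/
def ExcVal {n : ℕ} (w : Equiv.Perm (Fin n)) : Finset (Fin n) :=
  (ExcPos w).image w

/-- The excedance relation `∼`. -/
def ExcEq {n : ℕ} (v w : Equiv.Perm (Fin n)) : Prop :=
  ExcVal v = ExcVal w ∧ ExcPos v = ExcPos w

/-- The excedance relation as a setoid on `S_n`. -/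
def excSetoid (n : ℕ) : Setoid (Equiv.Perm (Fin n)) where
  r := ExcEq
  iseqv := ⟨fun _ => ⟨rfl, rfl⟩, fun h => ⟨h.1.symm, h.2.symm⟩,
    fun h h' => ⟨h.1.trans h'.1, h.2.trans h'.2⟩⟩

namespace NCP

/-- The excedance class `C_λ`. -/
def Cset {n : ℕ} (lam : NCP n) : Set (Equiv.Perm (Fin n)) :=
  {w | ExcVal w = Finset.univ \ lpos lam ∧ ExcPos w = Finset.univ \ rpos lam}

end NCP

/-- Number of inversions of a permutation. -/
def bruhatLen {n : ℕ} (w : Equiv.Perm (Fin n)) : ℕ :=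
  (Finset.univ.filter fun p : Fin n × Fin n => p.1 < p.2 ∧ w p.2 < w p.1).card

/-- The Bruhat order on `S_n` : generated by `v < w` whenever `w v⁻¹` is a
transposition and `ℓ(v) < ℓ(w)`. -/
def BruhatLE {n : ℕ} (v w : Equiv.Perm (Fin n)) : Prop :=
  Relation.ReflTransGen (fun a b => (b * a⁻¹).IsSwap ∧ bruhatLen a < bruhatLen b) v w

/-- Strict Bruhat order. -/
def BruhatLT {n : ℕ} (v w : Equiv.Perm (Fin n)) : Prop :=
  BruhatLE v w ∧ v ≠ w

/-- `λ` is covered by `μ` : `λ` is obtained from `μ` by removing an arc `(i, i+1)`,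
or by replacing an arc `(i,k)` by two arcs `(i,j)`, `(j,k)` with `i < j < k`
(validity of the result is enforced by `λ` being a noncrossing partition). -/
def NCPCovBy {n : ℕ} (lam mu : NCP n) : Prop :=
  (∃ i j : Fin n, (j : ℕ) = (i : ℕ) + 1 ∧ (i, j) ∈ mu.1 ∧ lam.1 = mu.1.erase (i, j)) ∨
  (∃ i j k : Fin n, i < j ∧ j < k ∧ (i, k) ∈ mu.1 ∧
      lam.1 = insert (i, j) (insert (j, k) (mu.1.erase (i, k))))

/-- The partial order `⪯` on noncrossing partitions generated by the covering relation. -/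
def NCPle {n : ℕ} (lam mu : NCP n) : Prop :=
  Relation.ReflTransGen (fun a b => NCPCovBy a b) lam mu

/-- The defining relations of the Temperley–Lieb algebra `TL_n(2)`. -/
inductive TLRel (n : ℕ) : FreeAlgebra ℂ (Fin (n - 1)) → FreeAlgebra ℂ (Fin (n - 1)) → Prop
  | sq (i : Fin (n - 1)) :
      TLRel n (FreeAlgebra.ι ℂ i * FreeAlgebra.ι ℂ i) (2 * FreeAlgebra.ι ℂ i)
  | far (i j : Fin (n - 1)) (h : (i : ℕ) + 1 < (j : ℕ) ∨ (j : ℕ) + 1 < (i : ℕ)) :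
      TLRel n (FreeAlgebra.ι ℂ i * FreeAlgebra.ι ℂ j) (FreeAlgebra.ι ℂ j * FreeAlgebra.ι ℂ i)
  | near (i j : Fin (n - 1)) (h : (i : ℕ) + 1 = (j : ℕ) ∨ (j : ℕ) + 1 = (i : ℕ)) :
      TLRel n (FreeAlgebra.ι ℂ i * FreeAlgebra.ι ℂ j * FreeAlgebra.ι ℂ i) (FreeAlgebra.ι ℂ i)

/-- The Temperley–Lieb algebra `TL_n(2)`. -/
abbrev TL (n : ℕ) := RingQuot (TLRel n)

/-- The generator `e_i` of `TL_n(2)`. -/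
def TLgen (n : ℕ) (i : Fin (n - 1)) : TL n :=
  RingQuot.mkAlgHom ℂ (TLRel n) (FreeAlgebra.ι ℂ i)

/-- The simple transposition `s_i = (i, i+1)` in `S_n`. -/
def simpleTransposition (n : ℕ) (i : Fin (n - 1)) : Equiv.Perm (Fin n) :=
  Equiv.swap ⟨i.val, lt_of_lt_of_le i.isLt (Nat.sub_le n 1)⟩
    ⟨i.val + 1, by have h := i.isLt; omega⟩

open MvPolynomial

/-- The monomial quasisymmetric polynomial `M_α` in `n` variables,
for a composition `α = (α 0, …, α (k-1))`. -/
noncomputable def Mpoly (n k : ℕ) (α : Fin k → ℕ) : MvPolynomial (Fin n) ℚ :=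
  ∑ c ∈ Finset.univ.filter (fun c : Fin k → Fin n => StrictMono c),
    ∏ s : Fin k, X (c s) ^ α s

/-- The vanishing polynomial `P_α`.  The sum over pairs (a coarsening `β ⪰ α` with
blocks witnessed by `1 = f_1 < ⋯ < f_{ℓ+1} = k+1`, and indices `i_1 < ⋯ < i_ℓ`)
is re-indexed by monotone maps `c : Fin k → Fin n`: the fibers of `c` are the blocks of
the coarsening, and `c` sends the `j`-th block to `i_j`.  The variable with 1-based label
`i` is `x_i`, so the rational constant attached to `c s : Fin n` is `(c s : ℕ) + 1`. -/
noncomputable def Ppoly (n k : ℕ) (α : Fin k → ℕ) : MvPolynomial (Fin n) ℚ :=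
  ∑ c ∈ Finset.univ.filter (fun c : Fin k → Fin n => Monotone c),
    ∏ s : Fin k,
      if ∀ t, t < s → c t < c s then
        X (c s) ^ α s - C ((((c s : ℕ) : ℚ) + 1) ^ α s)
      else C ((-(((c s : ℕ) : ℚ) + 1)) ^ α s)

/-- The top-degree homogeneous component `h(f)`. -/
noncomputable def topHom {n : ℕ} (f : MvPolynomial (Fin n) ℚ) : MvPolynomial (Fin n) ℚ :=
  MvPolynomial.homogeneousComponent f.totalDegree f

/-- The set `QSV_n ⊆ S_n`. -/
def QSVset (n : ℕ) : Set (Equiv.Perm (Fin n)) := {σ | ∃ lam : NCP n, NCP.IsQ lam σ}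

/-- The point `(σ(1), …, σ(n)) ∈ ℚⁿ` associated to a permutation (1-based labels). -/
def permPoint {n : ℕ} (σ : Equiv.Perm (Fin n)) : Fin n → ℚ := fun i => ((σ i : ℕ) : ℚ) + 1

/-- `QSV_n` as a set of points in `ℚⁿ`. -/
def QSVpoints (n : ℕ) : Set (Fin n → ℚ) := {p | ∃ σ ∈ QSVset n, p = permPoint σ}

/-- The vanishing ideal of a set of points in `ℚⁿ`. -/
noncomputable def vanishingIdeal (n : ℕ) (S : Set (Fin n → ℚ)) :
    Ideal (MvPolynomial (Fin n) ℚ) where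
  carrier := {f | ∀ p ∈ S, MvPolynomial.eval p f = 0}
  add_mem' := by
    intro a b ha hb p hp
    simp [map_add, ha p hp, hb p hp]
  zero_mem' := by
    intro p hp
    simp
  smul_mem' := by
    intro c f hf p hp
    simp [smul_eq_mul, map_mul, hf p hp]

/-- The monomial quasisymmetric polynomials `M_α` for nonempty compositions `α`
with `ℓ(α) ≤ n`. -/
def MpolySet (n : ℕ) : Set (MvPolynomial (Fin n) ℚ) :=
  {f | ∃ k, ∃ α : Fin k → ℕ, 0 < k ∧ k ≤ n ∧ (∀ s, 0 < α s) ∧ f = Mpoly n k α}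

/-- The vanishing polynomials `P_α` for nonempty compositions `α` with `ℓ(α) ≤ n`. -/
def PpolySet (n : ℕ) : Set (MvPolynomial (Fin n) ℚ) :=
  {f | ∃ k, ∃ α : Fin k → ℕ, 0 < k ∧ k ≤ n ∧ (∀ s, 0 < α s) ∧ f = Ppoly n k α}

/-- The space `QSym_n` of quasisymmetric polynomials : the span of `1` and the `M_α`. -/
def QSym (n : ℕ) : Submodule ℚ (MvPolynomial (Fin n) ℚ) :=
  Submodule.span ℚ (insert 1 (MpolySet n))

/-- `QSym_n⁺` : quasisymmetric polynomials with zero constant term. -/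
def QSymPlus (n : ℕ) : Set (MvPolynomial (Fin n) ℚ) :=
  {f | f ∈ QSym n ∧ MvPolynomial.constantCoeff f = 0}

/-- `gr(I) = ⟨h(f) : f ∈ I⟩`. -/
noncomputable def grIdeal (n : ℕ) (I : Ideal (MvPolynomial (Fin n) ℚ)) :
    Ideal (MvPolynomial (Fin n) ℚ) :=
  Ideal.span (topHom '' (I : Set (MvPolynomial (Fin n) ℚ)))

/-!
A `321`-pattern `(i, j, k)` can be slid to one with `i ∈ E_pos(w)`: if `w i < i`, some `p < i`
carries a larger value (the positions `≤ i` cannot all map below `w i`), and `(p, j, k)` is again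
a pattern. Dually, `k` can be slid right until `k ∉ E_pos(w)`, the value `w j > w k` at `j < k`
making the count strict. For the uniqueness, `w * σ ∼ w` amounts to `E_pos(w * σ) = E_pos(w)`
together with `σ` preserving `E_pos(w)`. Since `i ∈ E_pos(w)` and `k ∉ E_pos(w)`, this leaves
only `(i j)` when `j ∈ E_pos(w)` and only `(j k)` otherwise.
-/

section

open Equiv Finset

variable {n : ℕ}

def IsPattern321 (w : Perm (Fin n)) (i j k : Fin n) : Prop :=
  i < j ∧ j < k ∧ w j < w i ∧ w k < w j

theorem mem_excPos {w : Perm (Fin n)} {x : Fin n} : x ∈ ExcPos w ↔ x ≤ w x := by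
  simp [ExcPos]

theorem apply_mem_excVal {w : Perm (Fin n)} {x : Fin n} : w x ∈ ExcVal w ↔ x ∈ ExcPos w :=
  w.injective.mem_finset_image

theorem exists_lt_apply_lt_of_apply_lt {w : Perm (Fin n)} {x : Fin n} (hx : w x < x) :
    ∃ p < x, w x < w p := by
  by_contra! h
  have hmaps : Set.MapsTo w (Iio x) (Iio (w x)) := fun p hp =>
    mem_Iio.2 ((h p (mem_Iio.1 hp)).lt_of_ne (w.injective.ne (mem_Iio.1 hp).ne))
  have := card_le_card_of_injOn w hmaps w.injective.injOn
  rw [Fin.card_Iio, Fin.card_Iio] at this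
  exact hx.not_ge (Fin.le_iff_val_le_val.2 this)

theorem exists_gt_apply_lt_of_le_apply {w : Perm (Fin n)} {x y : Fin n} (hx : x ≤ w x)
    (hy : y < x) (hwy : w x < w y) : ∃ q > x, w q < w x := by
  by_contra! h
  have hmaps : Set.MapsTo w ↑(insert y (Ioi x) : Finset (Fin n)) ↑(Ioi (w x)) := by
    intro p hp
    rcases mem_insert.1 hp with rfl | hp
    · exact mem_Ioi.2 hwy
    · exact mem_Ioi.2 ((h p (mem_Ioi.1 hp)).lt_of_ne' (w.injective.ne (mem_Ioi.1 hp).ne'))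
  have := card_le_card_of_injOn w hmaps w.injective.injOn
  rw [card_insert_of_notMem (by simp [hy.le]), Fin.card_Ioi, Fin.card_Ioi] at this
  have : (x : ℕ) ≤ w x := hx
  omega

namespace IsPattern321

variable {w : Perm (Fin n)} {i j k : Fin n}

theorem exists_left_mem_excPos (h : IsPattern321 w i j k) :
    ∃ i', IsPattern321 w i' j k ∧ i' ∈ ExcPos w := by
  induction i using WellFoundedLT.induction with
  | _ i ih =>
    by_cases hi : i ≤ w i
    · exact ⟨i, h, mem_excPos.2 hi⟩
    · obtain ⟨p, hp, hwp⟩ := exists_lt_apply_lt_of_apply_lt (not_le.1 hi)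
      exact ih p hp ⟨hp.trans h.1, h.2.1, h.2.2.1.trans hwp, h.2.2.2⟩

theorem exists_right_notMem_excPos (h : IsPattern321 w i j k) :
    ∃ k', IsPattern321 w i j k' ∧ k' ∉ ExcPos w := by
  induction k using WellFoundedGT.induction with
  | _ k ih =>
    by_cases hk : k ≤ w k
    · obtain ⟨q, hq, hwq⟩ := exists_gt_apply_lt_of_le_apply hk h.2.1 h.2.2.2
      exact ih q hq ⟨h.1, h.2.1.trans hq, h.2.2.1, hwq.trans h.2.2.2⟩
    · exact ⟨k, h, fun hm => hk (mem_excPos.1 hm)⟩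

end IsPattern321

theorem excEq_mul_iff {w σ : Perm (Fin n)} :
    ExcEq (w * σ) w ↔ ExcPos (w * σ) = ExcPos w ∧ ∀ p, σ p ∈ ExcPos w ↔ p ∈ ExcPos w := by
  refine ⟨fun ⟨hval, hpos⟩ => ⟨hpos, fun p => ?_⟩, fun ⟨hpos, hσ⟩ => ⟨?_, hpos⟩⟩
  · rw [← apply_mem_excVal, ← hval, ← hpos, ← apply_mem_excVal, Perm.mul_apply]
  · ext y
    obtain ⟨p, rfl⟩ := (w * σ).surjective y
    rw [apply_mem_excVal, hpos, ← hσ, ← apply_mem_excVal, Perm.mul_apply]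

theorem swap_apply_mem_iff {α : Type*} [DecidableEq α] {s : Finset α} {a b : α}
    (hab : a ∈ s ↔ b ∈ s) (p : α) : swap a b p ∈ s ↔ p ∈ s := by
  rw [swap_apply_def]
  split_ifs with hpa hpb
  · rw [hpa, hab]
  · rw [hpb, hab]
  · rfl

theorem excEq_mul_swap {w : Perm (Fin n)} {a b : Fin n} (ha : a ≤ w b ↔ a ≤ w a)
    (hb : b ≤ w a ↔ b ≤ w b) (hab : a ≤ w a ↔ b ≤ w b) : ExcEq (w * swap a b) w := by
  refine excEq_mul_iff.2 ⟨?_, swap_apply_mem_iff (by simpa only [mem_excPos] using hab)⟩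
  ext x
  simp only [mem_excPos, Perm.mul_apply, swap_apply_def]
  split_ifs with hxa hxb
  · rw [hxa, ha]
  · rw [hxb, hb]
  · rfl

section Rearrangement

variable {w : Perm (Fin n)} {i j k : Fin n}

theorem existsUnique_excEq_of_mem_excPos (h : IsPattern321 w i j k) (hi : i ∈ ExcPos w)
    (hj : j ∈ ExcPos w) (hk : k ∉ ExcPos w) :
    ∃! σ : Perm (Fin n), σ ∈ ({swap i j, swap j k, swap i j * swap j k,
      swap j k * swap i j, swap i k} : Set (Perm (Fin n))) ∧ ExcEq (w * σ) w := by
  obtain ⟨hij, hjk, hwji, -⟩ := h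
  have hik := hij.trans hjk
  have hi' := mem_excPos.1 hi
  have hj' := mem_excPos.1 hj
  refine ⟨swap i j, ⟨by simp, excEq_mul_swap (iff_of_true (hij.le.trans hj') hi')
    (iff_of_true (hj'.trans hwji.le) hj') (iff_of_true hi' hj')⟩, ?_⟩
  rintro σ ⟨hσ, hexc⟩
  have hpres := (excEq_mul_iff.1 hexc).2
  simp only [Set.mem_insert_iff, Set.mem_singleton_iff] at hσ
  rcases hσ with rfl | rfl | rfl | rfl | rfl
  · rfl
  -- each remaining `σ` moves `i` or `j`, both in `ExcPos w`, to `k ∉ ExcPos w`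
  · exact absurd (by simpa using (hpres j).2 hj) hk
  · exact absurd (by simpa [swap_apply_of_ne_of_ne, hjk.ne', hik.ne'] using (hpres j).2 hj) hk
  · exact absurd (by simpa using (hpres i).2 hi) hk
  · exact absurd (by simpa using (hpres i).2 hi) hk

theorem existsUnique_excEq_of_notMem_excPos (h : IsPattern321 w i j k) (hi : i ∈ ExcPos w)
    (hj : j ∉ ExcPos w) (hk : k ∉ ExcPos w) :
    ∃! σ : Perm (Fin n), σ ∈ ({swap i j, swap j k, swap i j * swap j k,
      swap j k * swap i j, swap i k} : Set (Perm (Fin n))) ∧ ExcEq (w * σ) w := by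
  obtain ⟨hij, hjk, -, hwkj⟩ := h
  have hik := hij.trans hjk
  have hj' : w j < j := not_le.1 (mt mem_excPos.2 hj)
  have hk' : w k < k := not_le.1 (mt mem_excPos.2 hk)
  refine ⟨swap j k, ⟨by simp, excEq_mul_swap (iff_of_false (hwkj.trans hj').not_ge hj'.not_ge)
    (iff_of_false (hj'.trans hjk).not_ge hk'.not_ge) (iff_of_false hj'.not_ge hk'.not_ge)⟩, ?_⟩
  rintro σ ⟨hσ, hexc⟩
  have hpres := (excEq_mul_iff.1 hexc).2
  simp only [Set.mem_insert_iff, Set.mem_singleton_iff] at hσ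
  rcases hσ with rfl | rfl | rfl | rfl | rfl
  -- each remaining `σ` moves `j` or `k`, both outside `ExcPos w`, to `i ∈ ExcPos w`
  · exact absurd ((hpres j).1 (by simpa using hi)) hj
  · rfl
  · exact absurd ((hpres k).1 (by simpa using hi)) hk
  · exact absurd ((hpres j).1 (by simpa [swap_apply_of_ne_of_ne, hij.ne, hik.ne] using hi)) hj
  · exact absurd ((hpres k).1 (by simpa using hi)) hk

end Rearrangement

end

/-- if `w` has a `321`-pattern then it has one `i < j < k` with
`i ∈ E_pos(w)` and `k ∉ E_pos(w)`; moreover for any such pattern, exactly one of the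
five nontrivial rearrangements of the values `w(i), w(j), w(k)` among the positions
`i, j, k` lies in the same excedance class as `w`. -/
theorem stmt15 (n : ℕ) (w : Equiv.Perm (Fin n))
    (h : ∃ i0 j0 k0 : Fin n, i0 < j0 ∧ j0 < k0 ∧ w j0 < w i0 ∧ w k0 < w j0) :
    (∃ i j k : Fin n, i < j ∧ j < k ∧ w j < w i ∧ w k < w j ∧
      i ∈ ExcPos w ∧ k ∉ ExcPos w) ∧
    (∀ i j k : Fin n, i < j → j < k → w j < w i → w k < w j →
      i ∈ ExcPos w → k ∉ ExcPos w →
      ∃! σ : Equiv.Perm (Fin n),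
        σ ∈ ({Equiv.swap i j, Equiv.swap j k, Equiv.swap i j * Equiv.swap j k,
            Equiv.swap j k * Equiv.swap i j, Equiv.swap i k} :
          Set (Equiv.Perm (Fin n))) ∧ ExcEq (w * σ) w) := by
  refine ⟨?_, fun i j k hij hjk hwji hwkj hi hk => ?_⟩
  · obtain ⟨i0, j0, k0, h0⟩ := h
    obtain ⟨i, hpat, hi⟩ := IsPattern321.exists_left_mem_excPos h0
    obtain ⟨k, ⟨hij, hjk, hwji, hwkj⟩, hk⟩ := hpat.exists_right_notMem_excPos
    exact ⟨i, j0, k, hij, hjk, hwji, hwkj, hi, hk⟩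
  · have hpat : IsPattern321 w i j k := ⟨hij, hjk, hwji, hwkj⟩
    by_cases hj : j ∈ ExcPos w
    · exact existsUnique_excEq_of_mem_excPos hpat hi hj hk
    · exact existsUnique_excEq_of_notMem_excPos hpat hi hj hk
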